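/- arXiv:1607.00451 — 2 statements merged into one kernel-verified Lean document; each statement's English description precedes it below -/
import Mathlib

section
/- Let P(0),…,P(K+1) and Q(0),…,Q(K+1) be arbitrary families of real symmetric n×n matrices. For any deterministic initial state x₀ ∈ ℝⁿ and any admissible disturbance ν, the solution x(k) of the mean-field stochastic difference equation satisfies the identity: Σ_{k=0}^{K} E{ [x(k)−E x(k); ν(k)−E ν(k)]ᵀ M(P,k) [x(k)−E x(k); ν(k)−E ν(k)] } + Σ_{k=0}^{K} [E x(k); E ν(k)]ᵀ S(P,Q,k) [E x(k); E ν(k)] = E[(x(K+1)−E x(K+1))ᵀ P(K+1) (x(K+1)−E x(K+1))] + (E x(K+1))ᵀ Q(K+1) (E x(K+1)) − x₀ᵀ Q(0) x₀, where M(P,k) is the 2×2 block matrix with blocks M₁₁ = −P(k)+A(k)ᵀP(k+1)A(k)+C(k)ᵀP(k+1)C(k), M₁₂ = A(k)ᵀP(k+1)B(k)+C(k)ᵀP(k+1)D(k), M₂₁ = M₁₂ᵀ, M₂₂ = B(k)ᵀP(k+1)B(k)+D(k)ᵀP(k+1)D(k), and S(P,Q,k) is the 2×2 block matrix with blocks S₁₁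 = −Q(k)+𝔸(k)ᵀQ(k+1)𝔸(k)+ℂ(k)ᵀP(k+1)ℂ(k), S₁₂ = 𝔸(k)ᵀQ(k+1)𝔹(k)+ℂ(k)ᵀP(k+1)𝔻(k), S₂₁ = S₁₂ᵀ, S₂₂ = 𝔹(k)ᵀQ(k+1)𝔹(k)+𝔻(k)ᵀP(k+1)𝔻(k). -/
/-!
Split the state into its mean and its fluctuation. Taking expectations in the recursion gives
`E x(k+1) = 𝔸 E x(k) + 𝔹 E ν(k)`, and the fluctuation satisfies
`x(k+1) - E x(k+1) = (A y + B u) + ω(k) ((C y + D u) + (ℂ E x(k) + 𝔻 E ν(k)))`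
with `y = x(k) - E x(k)`, `u = ν(k) - E ν(k)`. Because `ω(k)` is independent of `(x(k), ν(k))`
with mean `0` and variance `1`, the cross terms vanish in expectation and the `ω(k)`-term
contributes its second moment; since `y` and `u` are centred, the mean and fluctuation parts
of the diffusion decouple as well. Reading the block matrices as quadratic forms in
`(y, u)` and `(E x(k), E ν(k))`, the `k`-th summand is then `V(k+1) - V(k)` for
`V(k) = E[(x(k) - E x(k))ᵀ P(k) (x(k) - E x(k))] + (E x(k))ᵀ Q(k) E x(k)`,
and the sum telescopes to `V(K+1) - V(0)`, where `V(0) = x₀ᵀ Q(0) x₀`.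
-/

open MeasureTheory ProbabilityTheory Matrix Finset

/-- The mean-field stochastic state recursion
`x(k+1) = A x + Ã E x + B ν + B̃ E ν + (C x + C̃ E x + D ν + D̃ E ν)·ω(k)`. -/
noncomputable def mfState {Ω : Type*} [MeasurableSpace Ω] (μ : Measure Ω) {n l : ℕ}
    (A At C Ct : ℕ → Matrix (Fin n) (Fin n) ℝ)
    (B Bt D Dt : ℕ → Matrix (Fin n) (Fin l) ℝ)
    (W : ℕ → Ω → ℝ) (x0 : Fin n → ℝ) (ν : ℕ → Ω → Fin l → ℝ) :
    ℕ → Ω → Fin n → ℝ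
  | 0 => fun _ => x0
  | (k+1) => fun a =>
      A k *ᵥ mfState μ A At C Ct B Bt D Dt W x0 ν k a
      + At k *ᵥ (∫ b, mfState μ A At C Ct B Bt D Dt W x0 ν k b ∂μ)
      + B k *ᵥ ν k a + Bt k *ᵥ (∫ b, ν k b ∂μ)
      + W k a • (C k *ᵥ mfState μ A At C Ct B Bt D Dt W x0 ν k a
          + Ct k *ᵥ (∫ b, mfState μ A At C Ct B Bt D Dt W x0 ν k b ∂μ)
          + D k *ᵥ ν k a + Dt k *ᵥ (∫ b, ν k b ∂μ))

/-- Admissibility of a disturbance: square integrability and independence of the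
noise `ω(k)` from the pair `(x(k), ν(k))`. -/
def mfAdmissible {Ω : Type*} [MeasurableSpace Ω] (μ : Measure Ω) {n l : ℕ} (K : ℕ)
    (W : ℕ → Ω → ℝ) (x : ℕ → Ω → Fin n → ℝ) (ν : ℕ → Ω → Fin l → ℝ) : Prop :=
  (∀ k ≤ K, MemLp (ν k) 2 μ) ∧
  (∀ k ≤ K, IndepFun (fun a => (x k a, ν k a)) (W k) μ)

theorem sumElim_dotProduct_fromBlocks_mulVec_sumElim {R ι κ : Type*} [CommRing R]
    [Fintype ι] [Fintype κ] (P₀ P₁ P₂ A C : Matrix ι ι R) (B D : Matrix ι κ R)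
    (hP₁ : P₁.IsSymm) (hP₂ : P₂.IsSymm) (y : ι → R) (u : κ → R) :
    Sum.elim y u ⬝ᵥ fromBlocks
      (-P₀ + Aᵀ * P₁ * A + Cᵀ * P₂ * C) (Aᵀ * P₁ * B + Cᵀ * P₂ * D)
      ((Aᵀ * P₁ * B + Cᵀ * P₂ * D)ᵀ) (Bᵀ * P₁ * B + Dᵀ * P₂ * D) *ᵥ Sum.elim y u
    = -(y ⬝ᵥ P₀ *ᵥ y) + (A *ᵥ y + B *ᵥ u) ⬝ᵥ P₁ *ᵥ (A *ᵥ y + B *ᵥ u)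
      + (C *ᵥ y + D *ᵥ u) ⬝ᵥ P₂ *ᵥ (C *ᵥ y + D *ᵥ u) := by
  rw [fromBlocks_mulVec, sumElim_dotProduct_sumElim]
  simp only [transpose_add, transpose_mul, transpose_transpose, hP₁.eq, hP₂.eq, add_mulVec,
    neg_mulVec, mulVec_add, dotProduct_add, dotProduct_neg, ← mulVec_mulVec, dotProduct_mulVec,
    vecMul_transpose, add_vecMul, add_dotProduct, Sum.elim_comp_inl, Sum.elim_comp_inr]
  ring

section Integration

variable {Ω ι κ : Type*} [MeasurableSpace Ω] {μ : Measure Ω} [Fintype ι] [Fintype κ]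

theorem MeasureTheory.MemLp.mulVec {p : ENNReal} (M : Matrix ι κ ℝ) {f : Ω → κ → ℝ}
    (hf : MemLp f p μ) : MemLp (fun a => M *ᵥ f a) p μ :=
  (LinearMap.toContinuousLinearMap M.mulVecLin).comp_memLp' hf

theorem MeasureTheory.Integrable.mulVec (M : Matrix ι κ ℝ) {f : Ω → κ → ℝ}
    (hf : Integrable f μ) : Integrable (fun a => M *ᵥ f a) μ :=
  (LinearMap.toContinuousLinearMap M.mulVecLin).integrable_comp hf

theorem integral_mulVec (M : Matrix ι κ ℝ) {f : Ω → κ → ℝ} (hf : Integrable f μ) :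
    ∫ a, M *ᵥ f a ∂μ = M *ᵥ ∫ a, f a ∂μ :=
  (LinearMap.toContinuousLinearMap M.mulVecLin).integral_comp_comm hf

theorem MeasureTheory.Integrable.dotProduct_const {f : Ω → ι → ℝ} (hf : Integrable f μ)
    (c : ι → ℝ) :
    Integrable (fun a => f a ⬝ᵥ c) μ :=
  (LinearMap.toContinuousLinearMap ((dotProductBilin ℝ ℝ).flip c)).integrable_comp hf

theorem integral_dotProduct_const {f : Ω → ι → ℝ} (hf : Integrable f μ) (c : ι → ℝ) :
    ∫ a, f a ⬝ᵥ c ∂μ = (∫ a, f a ∂μ) ⬝ᵥ c :=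
  (LinearMap.toContinuousLinearMap ((dotProductBilin ℝ ℝ).flip c)).integral_comp_comm hf

theorem integrable_dotProduct_mulVec (M : Matrix ι κ ℝ) {f : Ω → ι → ℝ} {g : Ω → κ → ℝ}
    (hf : MemLp f 2 μ) (hg : MemLp g 2 μ) : Integrable (fun a => f a ⬝ᵥ M *ᵥ g a) μ := by
  simp only [dotProduct, mulVec, Finset.mul_sum]
  refine integrable_finsetSum _ fun i _ => integrable_finsetSum _ fun j _ => ?_
  refine (((hf.eval i).integrable_mul (hg.eval j)).const_mul (M i j)).congr
    (ae_of_all _ fun a => ?_)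
  simp only [Pi.mul_apply]
  ring

theorem integral_sub_integral [IsProbabilityMeasure μ] {f : Ω → ι → ℝ} (hf : Integrable f μ) :
    ∫ a, (f a - ∫ b, f b ∂μ) ∂μ = 0 := by
  rw [integral_sub hf (integrable_const _), integral_const, probReal_univ, one_smul, sub_self]

theorem integral_mulVec_sub_integral_add [IsProbabilityMeasure μ] {ι' : Type*} [Fintype ι']
    (M : Matrix ι' ι ℝ) (N : Matrix ι' κ ℝ) {X : Ω → ι → ℝ} {V : Ω → κ → ℝ}
    (hX : Integrable X μ) (hV : Integrable V μ) :
    ∫ a, (M *ᵥ (X a - ∫ b, X b ∂μ) + N *ᵥ (V a - ∫ b, V b ∂μ)) ∂μ = 0 := by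
  have hy : Integrable (fun a => X a - ∫ b, X b ∂μ) μ := hX.sub (integrable_const _)
  have hu : Integrable (fun a => V a - ∫ b, V b ∂μ) μ := hV.sub (integrable_const _)
  rw [integral_add (hy.mulVec M) (hu.mulVec N), integral_mulVec M hy, integral_mulVec N hu,
    integral_sub_integral hX, integral_sub_integral hV, mulVec_zero, mulVec_zero, add_zero]

theorem integral_quadForm_add_const [IsProbabilityMeasure μ] (P : Matrix ι ι ℝ)
    {t : Ω → ι → ℝ} (ht : MemLp t 2 μ) (ht₀ : ∫ a, t a ∂μ = 0) (w : ι → ℝ) :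
    ∫ a, (t a + w) ⬝ᵥ P *ᵥ (t a + w) ∂μ = (∫ a, t a ⬝ᵥ P *ᵥ t a ∂μ) + w ⬝ᵥ P *ᵥ w := by
  have hexpand : ∀ a, (t a + w) ⬝ᵥ P *ᵥ (t a + w)
      = (t a ⬝ᵥ P *ᵥ t a + t a ⬝ᵥ (P *ᵥ w + w ᵥ* P)) + w ⬝ᵥ P *ᵥ w := fun a => by
    simp only [mulVec_add, dotProduct_add, add_dotProduct, dotProduct_mulVec w P (t a),
      dotProduct_comm (w ᵥ* P) (t a)]
    ring
  have hint := ht.integrable one_le_two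
  simp only [hexpand]
  have hquad := integrable_dotProduct_mulVec P ht ht
  have hcross := hint.dotProduct_const (P *ᵥ w + w ᵥ* P)
  rw [integral_add (hquad.fun_add hcross) (integrable_const _),
    integral_add hquad hcross, integral_dotProduct_const hint, ht₀,
    zero_dotProduct, add_zero, integral_const, probReal_univ, one_smul]

end Integration

section Noise

variable {Ω ι : Type*} [MeasurableSpace Ω] {μ : Measure Ω} [Fintype ι]

theorem MeasureTheory.MemLp.smul_of_indepFun {E : Type*} [NormedAddCommGroup E]
    [NormedSpace ℝ E] [MeasurableSpace E] [OpensMeasurableSpace E] {z : Ω → E} {W : Ω → ℝ}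
    (hz : MemLp z 2 μ) (hW : MemLp W 2 μ) (hind : IndepFun z W μ) :
    MemLp (fun a => W a • z a) 2 μ := by
  refine (memLp_two_iff_integrable_sq_norm (hW.1.smul hz.1)).2 ?_
  have hprod : Integrable ((fun a => ‖z a‖ ^ 2) * fun a => W a ^ 2) μ :=
    (hind.comp (measurable_norm.pow_const 2) (measurable_id.pow_const 2)).integrable_mul
      ((memLp_two_iff_integrable_sq_norm hz.1).1 hz) ((memLp_two_iff_integrable_sq hW.1).1 hW)
  refine hprod.congr (ae_of_all _ fun a => ?_)
  change ‖z a‖ ^ 2 * W a ^ 2 = ‖W a • z a‖ ^ 2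
  rw [norm_smul, mul_pow, Real.norm_eq_abs, sq_abs, mul_comm]

theorem integral_quadForm_add_smul_of_indepFun [IsFiniteMeasure μ] (P : Matrix ι ι ℝ)
    {s z : Ω → ι → ℝ} {W : Ω → ℝ} (hs : MemLp s 2 μ) (hz : MemLp z 2 μ) (hW : MemLp W 2 μ)
    (hW₀ : ∫ a, W a ∂μ = 0) (hW₁ : ∫ a, W a * W a ∂μ = 1)
    (hind : IndepFun (fun a => (s a, z a)) W μ) :
    ∫ a, (s a + W a • z a) ⬝ᵥ P *ᵥ (s a + W a • z a) ∂μ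
      = (∫ a, s a ⬝ᵥ P *ᵥ s a ∂μ) + ∫ a, z a ⬝ᵥ P *ᵥ z a ∂μ := by
  set cross : Ω → ℝ := fun a => s a ⬝ᵥ P *ᵥ z a + z a ⬝ᵥ P *ᵥ s a
  have hexpand : ∀ a, (s a + W a • z a) ⬝ᵥ P *ᵥ (s a + W a • z a)
      = s a ⬝ᵥ P *ᵥ s a + (cross a * W a + z a ⬝ᵥ P *ᵥ z a * (W a * W a)) := fun a => by
    simp only [cross, mulVec_add, mulVec_smul, dotProduct_add, add_dotProduct, dotProduct_smul,
      smul_dotProduct, smul_eq_mul]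
    ring
  have hcross_ind : IndepFun cross W μ := by
    have hφ : Measurable fun p : (ι → ℝ) × (ι → ℝ) => p.1 ⬝ᵥ P *ᵥ p.2 + p.2 ⬝ᵥ P *ᵥ p.1 := by
      fun_prop
    exact hind.comp hφ measurable_id
  have hquad_ind : IndepFun (fun a => z a ⬝ᵥ P *ᵥ z a) (fun a => W a * W a) μ := by
    have hφ : Measurable fun p : (ι → ℝ) × (ι → ℝ) => p.2 ⬝ᵥ P *ᵥ p.2 := by fun_prop
    exact hind.comp hφ (measurable_id.mul measurable_id)
  have hcross : Integrable cross μ :=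
    (integrable_dotProduct_mulVec P hs hz).add (integrable_dotProduct_mulVec P hz hs)
  have hquad := integrable_dotProduct_mulVec P hz hz
  have hWint := hW.integrable one_le_two
  have hWW : Integrable (fun a => W a * W a) μ := hW.integrable_mul hW
  have hcrossW : Integrable (fun a => cross a * W a) μ := hcross_ind.integrable_mul hcross hWint
  have hquadWW : Integrable (fun a => z a ⬝ᵥ P *ᵥ z a * (W a * W a)) μ :=
    hquad_ind.integrable_mul hquad hWW
  simp only [hexpand]
  rw [integral_add (integrable_dotProduct_mulVec P hs hs) (hcrossW.fun_add hquadWW),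
    integral_add hcrossW hquadWW,
    hcross_ind.integral_fun_mul_eq_mul_integral hcross.1 hWint.1,
    hquad_ind.integral_fun_mul_eq_mul_integral hquad.1 hWW.1, hW₀, hW₁, mul_zero, mul_one,
    zero_add]

end Noise

section MeanField

variable {Ω ι κ : Type*} [MeasurableSpace Ω] {μ : Measure Ω} [Fintype ι] [Fintype κ]

noncomputable def meanFieldQuadForm (μ : Measure Ω) (P Q : Matrix ι ι ℝ) (X : Ω → ι → ℝ) : ℝ :=
  (∫ a, (X a - ∫ b, X b ∂μ) ⬝ᵥ P *ᵥ (X a - ∫ b, X b ∂μ) ∂μ)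
    + (∫ b, X b ∂μ) ⬝ᵥ Q *ᵥ (∫ b, X b ∂μ)

theorem meanFieldQuadForm_const [IsProbabilityMeasure μ] (P Q : Matrix ι ι ℝ) (c : ι → ℝ) :
    meanFieldQuadForm μ P Q (fun _ => c) = c ⬝ᵥ Q *ᵥ c := by
  simp [meanFieldQuadForm]

theorem integral_add_const_add_smul [IsProbabilityMeasure μ] {s t : Ω → ι → ℝ} {W : Ω → ℝ}
    (hs : Integrable s μ) (ht : Integrable t μ) (hW : Integrable W μ)
    (hs₀ : ∫ a, s a ∂μ = 0) (hW₀ : ∫ a, W a ∂μ = 0) (hind : IndepFun t W μ) (m w : ι → ℝ) :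
    ∫ a, (s a + m + W a • (t a + w)) ∂μ = m := by
  have hind' : IndepFun W (fun a => t a + w) μ :=
    (hind.comp (measurable_id.add_const w) measurable_id).symm
  have hnoise : Integrable (fun a => W a • (t a + w)) μ :=
    hind'.integrable_smul hW (ht.add (integrable_const w))
  rw [integral_add (hs.fun_add (integrable_const m)) hnoise, integral_add hs (integrable_const m),
    hind'.integral_fun_smul_eq_smul_integral hW.1 (ht.add (integrable_const w)).1, hs₀, hW₀,
    integral_const, probReal_univ, one_smul, zero_smul, zero_add, add_zero]

theorem meanFieldQuadForm_add_const_add_smul [IsProbabilityMeasure μ] (P Q : Matrix ι ι ℝ)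
    {s t : Ω → ι → ℝ} {W : Ω → ℝ} (hs : MemLp s 2 μ) (ht : MemLp t 2 μ) (hW : MemLp W 2 μ)
    (hs₀ : ∫ a, s a ∂μ = 0) (ht₀ : ∫ a, t a ∂μ = 0) (hW₀ : ∫ a, W a ∂μ = 0)
    (hW₁ : ∫ a, W a * W a ∂μ = 1) (hind : IndepFun (fun a => (s a, t a)) W μ) (m w : ι → ℝ) :
    meanFieldQuadForm μ P Q (fun a => s a + m + W a • (t a + w))
      = (∫ a, s a ⬝ᵥ P *ᵥ s a ∂μ) + (∫ a, t a ⬝ᵥ P *ᵥ t a ∂μ) + w ⬝ᵥ P *ᵥ w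
        + m ⬝ᵥ Q *ᵥ m := by
  have hind_t : IndepFun t W μ := hind.comp measurable_snd measurable_id
  have hind_tw : IndepFun (fun a => (s a, t a + w)) W μ :=
    hind.comp (measurable_fst.prodMk (measurable_snd.add_const w)) measurable_id
  have htw : MemLp (fun a => t a + w) 2 μ := ht.add (memLp_const w)
  have hcenter : ∀ a, s a + m + W a • (t a + w) - m = s a + W a • (t a + w) := fun a => by
    abel
  rw [meanFieldQuadForm, integral_add_const_add_smul (hs.integrable one_le_two)
    (ht.integrable one_le_two) (hW.integrable one_le_two) hs₀ hW₀ hind_t]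
  simp only [hcenter]
  rw [integral_quadForm_add_smul_of_indepFun P hs htw hW hW₀ hW₁ hind_tw,
    integral_quadForm_add_const P ht ht₀ w]
  ring

-- `mfState μ … (k+1)` is definitionally `mfStep μ (A k) … (Dt k) (mfState μ … k) (ν k) (W k)`.
noncomputable def mfStep (μ : Measure Ω) (A At C Ct : Matrix ι ι ℝ) (B Bt D Dt : Matrix ι κ ℝ)
    (X : Ω → ι → ℝ) (V : Ω → κ → ℝ) (W : Ω → ℝ) : Ω → ι → ℝ :=
  fun a => A *ᵥ X a + At *ᵥ (∫ b, X b ∂μ) + B *ᵥ V a + Bt *ᵥ (∫ b, V b ∂μ)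
    + W a • (C *ᵥ X a + Ct *ᵥ (∫ b, X b ∂μ) + D *ᵥ V a + Dt *ᵥ (∫ b, V b ∂μ))

variable (μ) (A At C Ct : Matrix ι ι ℝ) (B Bt D Dt : Matrix ι κ ℝ)

theorem mfStep_eq_centered (X : Ω → ι → ℝ) (V : Ω → κ → ℝ) (W : Ω → ℝ) :
    mfStep μ A At C Ct B Bt D Dt X V W = fun a =>
      (A *ᵥ (X a - ∫ b, X b ∂μ) + B *ᵥ (V a - ∫ b, V b ∂μ))
      + ((A + At) *ᵥ (∫ b, X b ∂μ) + (B + Bt) *ᵥ (∫ b, V b ∂μ))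
      + W a • ((C *ᵥ (X a - ∫ b, X b ∂μ) + D *ᵥ (V a - ∫ b, V b ∂μ))
        + ((C + Ct) *ᵥ (∫ b, X b ∂μ) + (D + Dt) *ᵥ (∫ b, V b ∂μ))) := by
  funext a
  simp only [mfStep, mulVec_sub, add_mulVec]
  module

theorem memLp_mfStep [IsFiniteMeasure μ] {X : Ω → ι → ℝ} {V : Ω → κ → ℝ} {W : Ω → ℝ}
    (hX : MemLp X 2 μ) (hV : MemLp V 2 μ) (hW : MemLp W 2 μ)
    (hind : IndepFun (fun a => (X a, V a)) W μ) :
    MemLp (mfStep μ A At C Ct B Bt D Dt X V W) 2 μ := by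
  have hdrift : MemLp (fun a => A *ᵥ X a + At *ᵥ (∫ b, X b ∂μ) + B *ᵥ V a
      + Bt *ᵥ (∫ b, V b ∂μ)) 2 μ :=
    (((hX.mulVec A).add (memLp_const _)).add (hV.mulVec B)).add (memLp_const _)
  have hdiffusion : MemLp (fun a => C *ᵥ X a + Ct *ᵥ (∫ b, X b ∂μ) + D *ᵥ V a
      + Dt *ᵥ (∫ b, V b ∂μ)) 2 μ :=
    (((hX.mulVec C).add (memLp_const _)).add (hV.mulVec D)).add (memLp_const _)
  have hind' : IndepFun (fun a => C *ᵥ X a + Ct *ᵥ (∫ b, X b ∂μ) + D *ᵥ V a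
      + Dt *ᵥ (∫ b, V b ∂μ)) W μ := by
    have hφ : Measurable fun p : (ι → ℝ) × (κ → ℝ) =>
        C *ᵥ p.1 + Ct *ᵥ (∫ b, X b ∂μ) + D *ᵥ p.2 + Dt *ᵥ (∫ b, V b ∂μ) := by
      fun_prop
    exact hind.comp hφ measurable_id
  exact hdrift.add (hdiffusion.smul_of_indepFun hW hind')

theorem meanFieldQuadForm_mfStep_sub [IsProbabilityMeasure μ] (P₀ P₁ Q₀ Q₁ : Matrix ι ι ℝ)
    (hP₁ : P₁.IsSymm) (hQ₁ : Q₁.IsSymm) {X : Ω → ι → ℝ} {V : Ω → κ → ℝ} {W : Ω → ℝ}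
    (hX : MemLp X 2 μ) (hV : MemLp V 2 μ) (hW : MemLp W 2 μ) (hW₀ : ∫ a, W a ∂μ = 0)
    (hW₁ : ∫ a, W a * W a ∂μ = 1) (hind : IndepFun (fun a => (X a, V a)) W μ) :
    meanFieldQuadForm μ P₁ Q₁ (mfStep μ A At C Ct B Bt D Dt X V W)
        - meanFieldQuadForm μ P₀ Q₀ X
      = (∫ a, Sum.elim (X a - ∫ b, X b ∂μ) (V a - ∫ b, V b ∂μ) ⬝ᵥ
          fromBlocks (-P₀ + Aᵀ * P₁ * A + Cᵀ * P₁ * C) (Aᵀ * P₁ * B + Cᵀ * P₁ * D)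
            ((Aᵀ * P₁ * B + Cᵀ * P₁ * D)ᵀ) (Bᵀ * P₁ * B + Dᵀ * P₁ * D) *ᵥ
          Sum.elim (X a - ∫ b, X b ∂μ) (V a - ∫ b, V b ∂μ) ∂μ)
        + Sum.elim (∫ b, X b ∂μ) (∫ b, V b ∂μ) ⬝ᵥ
          fromBlocks
            (-Q₀ + (A + At)ᵀ * Q₁ * (A + At) + (C + Ct)ᵀ * P₁ * (C + Ct))
            ((A + At)ᵀ * Q₁ * (B + Bt) + (C + Ct)ᵀ * P₁ * (D + Dt))
            (((A + At)ᵀ * Q₁ * (B + Bt) + (C + Ct)ᵀ * P₁ * (D + Dt))ᵀ)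
            ((B + Bt)ᵀ * Q₁ * (B + Bt) + (D + Dt)ᵀ * P₁ * (D + Dt)) *ᵥ
          Sum.elim (∫ b, X b ∂μ) (∫ b, V b ∂μ) := by
  have hy : MemLp (fun a => X a - ∫ b, X b ∂μ) 2 μ := hX.sub (memLp_const _)
  have hu : MemLp (fun a => V a - ∫ b, V b ∂μ) 2 μ := hV.sub (memLp_const _)
  have hs : MemLp (fun a => A *ᵥ (X a - ∫ b, X b ∂μ) + B *ᵥ (V a - ∫ b, V b ∂μ)) 2 μ :=
    (hy.mulVec A).add (hu.mulVec B)
  have ht : MemLp (fun a => C *ᵥ (X a - ∫ b, X b ∂μ) + D *ᵥ (V a - ∫ b, V b ∂μ)) 2 μ :=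
    (hy.mulVec C).add (hu.mulVec D)
  have hind' : IndepFun (fun a => (A *ᵥ (X a - ∫ b, X b ∂μ) + B *ᵥ (V a - ∫ b, V b ∂μ),
      C *ᵥ (X a - ∫ b, X b ∂μ) + D *ᵥ (V a - ∫ b, V b ∂μ))) W μ := by
    have hφ : Measurable fun p : (ι → ℝ) × (κ → ℝ) =>
        (A *ᵥ (p.1 - ∫ b, X b ∂μ) + B *ᵥ (p.2 - ∫ b, V b ∂μ),
          C *ᵥ (p.1 - ∫ b, X b ∂μ) + D *ᵥ (p.2 - ∫ b, V b ∂μ)) := by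
      fun_prop
    exact hind.comp hφ measurable_id
  have hX₁ := hX.integrable one_le_two
  have hV₁ := hV.integrable one_le_two
  rw [mfStep_eq_centered, meanFieldQuadForm_add_const_add_smul P₁ Q₁ hs ht hW
    (integral_mulVec_sub_integral_add A B hX₁ hV₁)
    (integral_mulVec_sub_integral_add C D hX₁ hV₁) hW₀ hW₁ hind']
  simp only [sumElim_dotProduct_fromBlocks_mulVec_sumElim _ _ _ _ _ _ _ hP₁ hP₁,
    sumElim_dotProduct_fromBlocks_mulVec_sumElim _ _ _ _ _ _ _ hQ₁ hP₁]
  have hyy := (integrable_dotProduct_mulVec P₀ hy hy).fun_neg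
  have hss := integrable_dotProduct_mulVec P₁ hs hs
  rw [integral_add (hyy.fun_add hss) (integrable_dotProduct_mulVec P₁ ht ht),
    integral_add hyy hss, integral_neg, meanFieldQuadForm]
  ring

end MeanField

theorem memLp_mfState {Ω : Type*} [MeasurableSpace Ω] (μ : Measure Ω) [IsFiniteMeasure μ]
    {K n l : ℕ} (A At C Ct : ℕ → Matrix (Fin n) (Fin n) ℝ)
    (B Bt D Dt : ℕ → Matrix (Fin n) (Fin l) ℝ) (W : ℕ → Ω → ℝ) (x0 : Fin n → ℝ)
    (ν : ℕ → Ω → Fin l → ℝ) (hW : ∀ k ≤ K, MemLp (W k) 2 μ)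
    (hadm : mfAdmissible μ K W (mfState μ A At C Ct B Bt D Dt W x0 ν) ν) :
    ∀ k ≤ K + 1, MemLp (mfState μ A At C Ct B Bt D Dt W x0 ν k) 2 μ := by
  intro k
  induction k with
  | zero => exact fun _ => memLp_const x0
  | succ k ih =>
    intro hk
    exact memLp_mfStep μ (A k) (At k) (C k) (Ct k) (B k) (Bt k) (D k) (Dt k) (ih (by omega))
      (hadm.1 k (by omega)) (hW k (by omega)) (hadm.2 k (by omega))

/-- Lemma 2.2 of the paper.  For arbitrary families of symmetric
matrices `P(0),…,P(K+1)`, `Q(0),…,Q(K+1)`, any deterministic `x₀` and any admissible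
disturbance `ν`, the quadratic sums built from the block matrices `M(P,k)` and
`S(P,Q,k)` telescope to the terminal terms. -/
theorem mf_lemma22 {Ω : Type*} [MeasurableSpace Ω] (μ : Measure Ω) [IsProbabilityMeasure μ]
    (K n l : ℕ)
    (A At C Ct : ℕ → Matrix (Fin n) (Fin n) ℝ)
    (B Bt D Dt : ℕ → Matrix (Fin n) (Fin l) ℝ)
    (W : ℕ → Ω → ℝ)
    (hW2 : ∀ k ≤ K, MemLp (W k) 2 μ)
    (hWmean : ∀ k ≤ K, ∫ a, W k a ∂μ = 0)
    (hWcov : ∀ s ≤ K, ∀ t ≤ K, ∫ a, W s a * W t a ∂μ = if s = t then (1:ℝ) else 0)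
    (P Q : ℕ → Matrix (Fin n) (Fin n) ℝ)
    (hP : ∀ k ≤ K + 1, (P k).IsSymm) (hQ : ∀ k ≤ K + 1, (Q k).IsSymm)
    (x0 : Fin n → ℝ) (ν : ℕ → Ω → Fin l → ℝ)
    (x : ℕ → Ω → Fin n → ℝ)
    (hx : x = mfState μ A At C Ct B Bt D Dt W x0 ν)
    (hadm : mfAdmissible μ K W x ν) :
    (∑ k ∈ Finset.range (K + 1), ∫ a,
        (Sum.elim (x k a - ∫ b, x k b ∂μ) (ν k a - ∫ b, ν k b ∂μ)) ⬝ᵥ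
          (Matrix.fromBlocks
            (-(P k) + (A k)ᵀ * P (k+1) * A k + (C k)ᵀ * P (k+1) * C k)
            ((A k)ᵀ * P (k+1) * B k + (C k)ᵀ * P (k+1) * D k)
            (((A k)ᵀ * P (k+1) * B k + (C k)ᵀ * P (k+1) * D k)ᵀ)
            ((B k)ᵀ * P (k+1) * B k + (D k)ᵀ * P (k+1) * D k)) *ᵥ
          (Sum.elim (x k a - ∫ b, x k b ∂μ) (ν k a - ∫ b, ν k b ∂μ)) ∂μ)
    + (∑ k ∈ Finset.range (K + 1),
        (Sum.elim (∫ b, x k b ∂μ) (∫ b, ν k b ∂μ)) ⬝ᵥ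
          (Matrix.fromBlocks
            (-(Q k) + (A k + At k)ᵀ * Q (k+1) * (A k + At k)
              + (C k + Ct k)ᵀ * P (k+1) * (C k + Ct k))
            ((A k + At k)ᵀ * Q (k+1) * (B k + Bt k)
              + (C k + Ct k)ᵀ * P (k+1) * (D k + Dt k))
            (((A k + At k)ᵀ * Q (k+1) * (B k + Bt k)
              + (C k + Ct k)ᵀ * P (k+1) * (D k + Dt k))ᵀ)
            ((B k + Bt k)ᵀ * Q (k+1) * (B k + Bt k)
              + (D k + Dt k)ᵀ * P (k+1) * (D k + Dt k))) *ᵥ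
          (Sum.elim (∫ b, x k b ∂μ) (∫ b, ν k b ∂μ)))
    = (∫ a, (x (K+1) a - ∫ b, x (K+1) b ∂μ) ⬝ᵥ (P (K+1)) *ᵥ (x (K+1) a - ∫ b, x (K+1) b ∂μ) ∂μ)
      + (∫ b, x (K+1) b ∂μ) ⬝ᵥ (Q (K+1)) *ᵥ (∫ b, x (K+1) b ∂μ)
      - x0 ⬝ᵥ (Q 0) *ᵥ x0 := by
  subst hx
  set x := mfState μ A At C Ct B Bt D Dt W x0 ν
  have hL2 := memLp_mfState μ A At C Ct B Bt D Dt W x0 ν hW2 hadm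
  rw [← sum_add_distrib, sum_congr rfl (g := fun k => meanFieldQuadForm μ (P (k+1)) (Q (k+1))
      (x (k+1)) - meanFieldQuadForm μ (P k) (Q k) (x k)) fun k hk => by
    have hk : k ≤ K := Nat.lt_succ_iff.mp (mem_range.mp hk)
    exact (meanFieldQuadForm_mfStep_sub μ (A k) (At k) (C k) (Ct k) (B k) (Bt k) (D k) (Dt k)
      (P k) (P (k+1)) (Q k) (Q (k+1)) (hP _ (by omega)) (hQ _ (by omega)) (hL2 k (by omega))
      (hadm.1 k hk) (hW2 k hk) (hWmean k hk) (by simpa using hWcov k hk k hk)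
      (hadm.2 k hk)).symm,
    sum_range_sub fun k => meanFieldQuadForm μ (P k) (Q k) (x k)]
  rw [show x 0 = fun _ => x0 from rfl, meanFieldQuadForm_const]
  rfl
end

section
/- (Completing the square, centered part) Let γ > 0 and suppose P₁(0),…,P₁(K+1) are symmetric n×n matrices satisfying P₁(k) = L(P₁(k+1),k) − G(P₁(k+1),k)·H(P₁(k+1),k)⁻¹·G(P₁(k+1),k)ᵀ with H(P₁(k+1),k) > 0 for all k. Then for any admissible disturbance ν with associated state x: Σ_{k=0}^{K} E{ [x(k)−E x(k); ν(k)−E ν(k)]ᵀ M̃(P₁,k) [x(k)−E x(k); ν(k)−E ν(k)] } = Σ_{k=0}^{K} E{ [(ν(k)−E ν(k)) − (ν*(k)−E ν*(k))]ᵀ H(P₁(k+1),k) [(ν(k)−E ν(k)) − (ν*(k)−E ν*(k))] }, where ν*(k)−E ν*(k) := −H(P₁(k+1),k)⁻¹G(P₁(k+1),k)ᵀ(x(k)−E x(k)), and M̃(P₁,k) is the 2×2 block matrix with blocks M̃₁₁ = −P₁(k)+A(k)ᵀP₁(k+1)A(k)+C(k)ᵀP₁(k+1)C(k)−Φ(k)ᵀΦ(k),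 M̃₁₂ = A(k)ᵀP₁(k+1)B(k)+C(k)ᵀP₁(k+1)D(k), M̃₂₁ = M̃₁₂ᵀ, M̃₂₂ = γ²I_l+B(k)ᵀP₁(k+1)B(k)+D(k)ᵀP₁(k+1)D(k). -/
open MeasureTheory ProbabilityTheory Matrix Finset

/-- `L`-type Riccati operator: `AᵀQA + CᵀPC − ΦᵀΦ` (with `Q = P` this is `L(P)`,
with `A = 𝔸`, `C = ℂ` it is `L̃(P,Q)`). -/
noncomputable def mfL {n m : ℕ} (A C : Matrix (Fin n) (Fin n) ℝ)
    (Φ : Matrix (Fin m) (Fin n) ℝ) (Q P : Matrix (Fin n) (Fin n) ℝ) :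
    Matrix (Fin n) (Fin n) ℝ :=
  Aᵀ * Q * A + Cᵀ * P * C - Φᵀ * Φ

/-- `G`-type Riccati operator: `AᵀQB + CᵀPD`. -/
noncomputable def mfG {n l : ℕ} (A C : Matrix (Fin n) (Fin n) ℝ)
    (B D : Matrix (Fin n) (Fin l) ℝ) (Q P : Matrix (Fin n) (Fin n) ℝ) :
    Matrix (Fin n) (Fin l) ℝ :=
  Aᵀ * Q * B + Cᵀ * P * D

/-- `H`-type operator: `γ²I + BᵀQB + DᵀPD`. -/
noncomputable def mfH {n l : ℕ} (γ : ℝ) (B D : Matrix (Fin n) (Fin l) ℝ)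
    (Q P : Matrix (Fin n) (Fin n) ℝ) : Matrix (Fin l) (Fin l) ℝ :=
  γ^2 • (1 : Matrix (Fin l) (Fin l) ℝ) + Bᵀ * Q * B + Dᵀ * P * D

/-!
Everything happens pointwise in `ω` and for each `k` separately. The Riccati equation says exactly
that the upper-left block of `M̃(P₁,k)` is `G H⁻¹ Gᵀ`, i.e. that the Schur complement of the
block `H` in `M̃(P₁,k)` vanishes; the Schur-complement identity for a block quadratic form then
reduces the form to `(v + H⁻¹Gᵀy)ᵀ H (v + H⁻¹Gᵀy)` with `y = x(k) - E x(k)`, `v = ν(k) - E ν(k)`.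
-/

namespace Matrix

theorem sumElim_dotProduct_fromBlocks_mulVec_of_schur_eq_zero {m n R : Type*}
    [Fintype m] [Fintype n] [DecidableEq n] [CommRing R] [StarRing R] [TrivialStar R]
    {A : Matrix m m R} (B : Matrix m n R) {D : Matrix n n R} [Invertible D] (hD : D.IsSymm)
    (hA : A = B * D⁻¹ * Bᵀ) (x : m → R) (y : n → R) :
    Sum.elim x y ⬝ᵥ fromBlocks A B Bᵀ D *ᵥ Sum.elim x y
      = (y + (D⁻¹ * Bᵀ) *ᵥ x) ⬝ᵥ D *ᵥ (y + (D⁻¹ * Bᵀ) *ᵥ x) := by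
  have hDh : D.IsHermitian := by rw [IsHermitian, conjTranspose_eq_transpose_of_trivial, hD.eq]
  have h := schur_complement_eq₂₂ A B x y hDh
  simp only [star_trivial, conjTranspose_eq_transpose_of_trivial] at h
  rw [dotProduct_mulVec, dotProduct_mulVec, h, hA, sub_self, vecMul_zero, zero_dotProduct,
    add_zero, add_comm y]

end Matrix

theorem mfH_isSymm {n l : ℕ} (γ : ℝ) (B D : Matrix (Fin n) (Fin l) ℝ)
    {Q P : Matrix (Fin n) (Fin n) ℝ} (hQ : Q.IsSymm) (hP : P.IsSymm) :
    (mfH γ B D Q P).IsSymm := by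
  simp only [IsSymm, mfH, transpose_add, transpose_smul, transpose_one, transpose_mul,
    transpose_transpose, hQ.eq, hP.eq, Matrix.mul_assoc]

theorem neg_add_mfL_eq_of_riccati {n l m : ℕ} {γ : ℝ} {A C : Matrix (Fin n) (Fin n) ℝ}
    {B D : Matrix (Fin n) (Fin l) ℝ} {Φ : Matrix (Fin m) (Fin n) ℝ}
    {P Q : Matrix (Fin n) (Fin n) ℝ}
    (hP : P = mfL A C Φ Q Q - mfG A C B D Q Q * (mfH γ B D Q Q)⁻¹ * (mfG A C B D Q Q)ᵀ) :
    -P + Aᵀ * Q * A + Cᵀ * Q * C - Φᵀ * Φ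
      = mfG A C B D Q Q * (mfH γ B D Q Q)⁻¹ * (mfG A C B D Q Q)ᵀ := by
  rw [hP, mfL]
  abel

theorem mf_complete_square_centered_general {Ω : Type*} [MeasurableSpace Ω]
    (μ : Measure Ω)
    (K n l m : ℕ) (γ : ℝ)
    (A C : ℕ → Matrix (Fin n) (Fin n) ℝ)
    (B D : ℕ → Matrix (Fin n) (Fin l) ℝ)
    (Φ : ℕ → Matrix (Fin m) (Fin n) ℝ)
    (P1 : ℕ → Matrix (Fin n) (Fin n) ℝ)
    (hsymm : ∀ k ≤ K + 1, (P1 k).IsSymm)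
    (hP1eq : ∀ k ≤ K,
      P1 k = mfL (A k) (C k) (Φ k) (P1 (k+1)) (P1 (k+1))
        - mfG (A k) (C k) (B k) (D k) (P1 (k+1)) (P1 (k+1))
          * (mfH γ (B k) (D k) (P1 (k+1)) (P1 (k+1)))⁻¹
          * (mfG (A k) (C k) (B k) (D k) (P1 (k+1)) (P1 (k+1)))ᵀ)
    (hposH : ∀ k ≤ K, (mfH γ (B k) (D k) (P1 (k+1)) (P1 (k+1))).PosDef)
    (ν : ℕ → Ω → Fin l → ℝ)
    (x : ℕ → Ω → Fin n → ℝ) :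
    (∑ k ∈ Finset.range (K + 1), ∫ a,
        (Sum.elim (x k a - ∫ b, x k b ∂μ) (ν k a - ∫ b, ν k b ∂μ)) ⬝ᵥ
          (Matrix.fromBlocks
            (-(P1 k) + (A k)ᵀ * P1 (k+1) * A k + (C k)ᵀ * P1 (k+1) * C k - (Φ k)ᵀ * Φ k)
            ((A k)ᵀ * P1 (k+1) * B k + (C k)ᵀ * P1 (k+1) * D k)
            (((A k)ᵀ * P1 (k+1) * B k + (C k)ᵀ * P1 (k+1) * D k)ᵀ)
            (γ^2 • (1 : Matrix (Fin l) (Fin l) ℝ)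
              + (B k)ᵀ * P1 (k+1) * B k + (D k)ᵀ * P1 (k+1) * D k)) *ᵥ
          (Sum.elim (x k a - ∫ b, x k b ∂μ) (ν k a - ∫ b, ν k b ∂μ)) ∂μ)
    = ∑ k ∈ Finset.range (K + 1), ∫ a,
        ((ν k a - ∫ b, ν k b ∂μ)
          + ((mfH γ (B k) (D k) (P1 (k+1)) (P1 (k+1)))⁻¹
              * (mfG (A k) (C k) (B k) (D k) (P1 (k+1)) (P1 (k+1)))ᵀ) *ᵥ
            (x k a - ∫ b, x k b ∂μ)) ⬝ᵥ
        (mfH γ (B k) (D k) (P1 (k+1)) (P1 (k+1))) *ᵥ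
        ((ν k a - ∫ b, ν k b ∂μ)
          + ((mfH γ (B k) (D k) (P1 (k+1)) (P1 (k+1)))⁻¹
              * (mfG (A k) (C k) (B k) (D k) (P1 (k+1)) (P1 (k+1)))ᵀ) *ᵥ
            (x k a - ∫ b, x k b ∂μ)) ∂μ := by
  refine Finset.sum_congr rfl fun k hk ↦ integral_congr_ae (.of_forall fun a ↦ ?_)
  have hkK : k ≤ K := Nat.lt_succ_iff.mp (Finset.mem_range.mp hk)
  have : Invertible (mfH γ (B k) (D k) (P1 (k+1)) (P1 (k+1))) := (hposH k hkK).isUnit.invertible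
  have hP1sym := hsymm (k + 1) (by omega)
  exact sumElim_dotProduct_fromBlocks_mulVec_of_schur_eq_zero _
    (mfH_isSymm γ _ _ hP1sym hP1sym) (neg_add_mfL_eq_of_riccati (hP1eq k hkK)) _ _

/-- completing the square, centered part. -/
theorem mf_complete_square_centered {Ω : Type*} [MeasurableSpace Ω]
    (μ : Measure Ω) [IsProbabilityMeasure μ]
    (K n l m : ℕ) (γ : ℝ) (hγ : 0 < γ)
    (A At C Ct : ℕ → Matrix (Fin n) (Fin n) ℝ)
    (B Bt D Dt : ℕ → Matrix (Fin n) (Fin l) ℝ)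
    (Φ : ℕ → Matrix (Fin m) (Fin n) ℝ)
    (W : ℕ → Ω → ℝ)
    (hW2 : ∀ k ≤ K, MemLp (W k) 2 μ)
    (hWmean : ∀ k ≤ K, ∫ a, W k a ∂μ = 0)
    (hWcov : ∀ s ≤ K, ∀ t ≤ K, ∫ a, W s a * W t a ∂μ = if s = t then (1:ℝ) else 0)
    (P1 : ℕ → Matrix (Fin n) (Fin n) ℝ)
    (hsymm : ∀ k ≤ K + 1, (P1 k).IsSymm)
    (hP1eq : ∀ k ≤ K,
      P1 k = mfL (A k) (C k) (Φ k) (P1 (k+1)) (P1 (k+1))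
        - mfG (A k) (C k) (B k) (D k) (P1 (k+1)) (P1 (k+1))
          * (mfH γ (B k) (D k) (P1 (k+1)) (P1 (k+1)))⁻¹
          * (mfG (A k) (C k) (B k) (D k) (P1 (k+1)) (P1 (k+1)))ᵀ)
    (hposH : ∀ k ≤ K, (mfH γ (B k) (D k) (P1 (k+1)) (P1 (k+1))).PosDef)
    (x0 : Fin n → ℝ) (ν : ℕ → Ω → Fin l → ℝ)
    (x : ℕ → Ω → Fin n → ℝ)
    (hx : x = mfState μ A At C Ct B Bt D Dt W x0 ν)
    (hadm : mfAdmissible μ K W x ν) :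
    (∑ k ∈ Finset.range (K + 1), ∫ a,
        (Sum.elim (x k a - ∫ b, x k b ∂μ) (ν k a - ∫ b, ν k b ∂μ)) ⬝ᵥ
          (Matrix.fromBlocks
            (-(P1 k) + (A k)ᵀ * P1 (k+1) * A k + (C k)ᵀ * P1 (k+1) * C k - (Φ k)ᵀ * Φ k)
            ((A k)ᵀ * P1 (k+1) * B k + (C k)ᵀ * P1 (k+1) * D k)
            (((A k)ᵀ * P1 (k+1) * B k + (C k)ᵀ * P1 (k+1) * D k)ᵀ)
            (γ^2 • (1 : Matrix (Fin l) (Fin l) ℝ)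
              + (B k)ᵀ * P1 (k+1) * B k + (D k)ᵀ * P1 (k+1) * D k)) *ᵥ
          (Sum.elim (x k a - ∫ b, x k b ∂μ) (ν k a - ∫ b, ν k b ∂μ)) ∂μ)
    = ∑ k ∈ Finset.range (K + 1), ∫ a,
        ((ν k a - ∫ b, ν k b ∂μ)
          + ((mfH γ (B k) (D k) (P1 (k+1)) (P1 (k+1)))⁻¹
              * (mfG (A k) (C k) (B k) (D k) (P1 (k+1)) (P1 (k+1)))ᵀ) *ᵥ
            (x k a - ∫ b, x k b ∂μ)) ⬝ᵥ
        (mfH γ (B k) (D k) (P1 (k+1)) (P1 (k+1))) *ᵥ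
        ((ν k a - ∫ b, ν k b ∂μ)
          + ((mfH γ (B k) (D k) (P1 (k+1)) (P1 (k+1)))⁻¹
              * (mfG (A k) (C k) (B k) (D k) (P1 (k+1)) (P1 (k+1)))ᵀ) *ᵥ
            (x k a - ∫ b, x k b ∂μ)) ∂μ :=
  mf_complete_square_centered_general μ K n l m γ A C B D Φ P1 hsymm hP1eq hposH ν x
end
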